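/- For each t ∈ ℂ, the bracket defined on the span of {e_i : i ≥ 1} by [e₂, e_j]³_t = (j−2)e_{j+2} + t j e_j for j ≠ 2, and [e_i, e_j]³_t = (j−i)e_{i+j} when i ≠ 2 and j ≠ 2 (extended antisymmetrically), satisfies the Jacobi identity. -/

import Mathlib

/-- Structure constants of the third deformation of `L₁`:
`[e₂, e_j]³_t = (j−2) e_{j+2} + t j e_j` for `j ≠ 2`, `[e_i, e_j]³_t = (j−i) e_{i+j}` for
`i ≠ 2, j ≠ 2`, extended antisymmetrically (and `[e₂,e₂] = 0`). -/
noncomputable def c13 (t : ℂ) (i j : ℕ+) : ℕ+ →₀ ℂ :=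
  if i = 2 ∧ j = 2 then 0
  else if i = 2 then
    (((j : ℕ) : ℂ) - 2) • Finsupp.single (j + 2) (1 : ℂ)
      + (t * ((j : ℕ) : ℂ)) • Finsupp.single j (1 : ℂ)
  else if j = 2 then
    -((((i : ℕ) : ℂ) - 2) • Finsupp.single (i + 2) (1 : ℂ)
      + (t * ((i : ℕ) : ℂ)) • Finsupp.single i (1 : ℂ))
  else (((j : ℕ) : ℂ) - ((i : ℕ) : ℂ)) • Finsupp.single (i + j) (1 : ℂ)

/-- The bilinear extension of `c13`. -/
noncomputable def L1br3 (t : ℂ) : (ℕ+ →₀ ℂ) →ₗ[ℂ] (ℕ+ →₀ ℂ) →ₗ[ℂ] (ℕ+ →₀ ℂ) :=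
  Finsupp.lsum ℂ fun i => LinearMap.toSpanSingleton ℂ _
    (Finsupp.lsum ℂ fun j => LinearMap.toSpanSingleton ℂ _ (c13 t i j))

/-!
Send `e_n` to the polynomial vector field `x^{n+1} d/dx` when `n ≠ 2` and `e₂` to
`(x³ + t x) d/dx`. Since `[f d/dx, g d/dx] = (f g' - g f') d/dx`, a direct computation on basis
vectors shows that this linear map turns `[·,·]³_t` into the commutator of derivations of `ℂ[x]`.
It is injective (the coefficient of `x^{m+1}` in the image of `v` is the `e_m`-coordinate of `v`),
so antisymmetry and the Jacobi identity are inherited from the Lie algebra of derivations.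
-/

section LieEmbedding

variable {M L F : Type*} [AddCommGroup M] [LieRing L] [FunLike F M L] [AddMonoidHomClass F M L]

theorem bracket_antisymm_of_injective_lie (B : M → M → M) (Φ : F) (hΦ : Function.Injective Φ)
    (hB : ∀ x y, Φ (B x y) = ⁅Φ x, Φ y⁆) (x y : M) : B x y = -B y x :=
  hΦ <| by rw [map_neg, hB, hB, lie_skew]

theorem bracket_jacobi_of_injective_lie (B : M → M → M) (Φ : F) (hΦ : Function.Injective Φ)
    (hB : ∀ x y, Φ (B x y) = ⁅Φ x, Φ y⁆) (x y z : M) :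
    B (B x y) z + B (B y z) x + B (B z x) y = 0 :=
  hΦ <| by
    simp only [map_add, map_zero, hB]
    calc _ = -(⁅Φ x, ⁅Φ y, Φ z⁆⁆ + ⁅Φ y, ⁅Φ z, Φ x⁆⁆ + ⁅Φ z, ⁅Φ x, Φ y⁆⁆) := by
          simp only [← lie_skew ⁅_, _⁆ (Φ _)]; abel
      _ = 0 := by rw [lie_jacobi, neg_zero]

end LieEmbedding

theorem Finsupp.map_bracket_of_map_bracket_single {R ι L : Type*} [CommRing R] [LieRing L]
    [LieAlgebra R L] (B : (ι →₀ R) →ₗ[R] (ι →₀ R) →ₗ[R] (ι →₀ R)) (Φ : (ι →₀ R) →ₗ[R] L)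
    (h : ∀ i j, Φ (B (single i 1) (single j 1)) = ⁅Φ (single i 1), Φ (single j 1)⁆)
    (x y : ι →₀ R) : Φ (B x y) = ⁅Φ x, Φ y⁆ := by
  have hext : B.compr₂ Φ = (LieModule.toEnd R L L : L →ₗ[R] Module.End R L).compl₁₂ Φ Φ := by
    ext i j
    simpa using h i j
  simpa using LinearMap.congr_fun₂ hext x y

namespace Polynomial

variable {R : Type*} [CommRing R]

theorem mkDerivation_injective : Function.Injective (mkDerivation R : R[X] → _) :=
  (mkDerivationEquiv R).injective

theorem lie_mkDerivation (f g : R[X]) :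
    ⁅mkDerivation R f, mkDerivation R g⁆ =
      mkDerivation R (f * derivative g - g * derivative f) := by
  ext : 1
  simp only [Derivation.commutator_apply, mkDerivation_apply, derivative_X, smul_eq_mul, one_mul,
    map_sub, Derivation.coe_sub, Pi.sub_apply]
  ring

end Polynomial

open Polynomial

theorem PNat.add_two_ne_two (k : ℕ+) : k + 2 ≠ 2 := fun h => by
  have := congrArg PNat.val h
  rw [PNat.add_coe, PNat.val_ofNat] at this
  have := k.pos
  omega

theorem PNat.eq_of_add_eq_two {i j : ℕ+} (h : i + j = 2) : i = j := by
  have := congrArg PNat.val h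
  rw [PNat.add_coe, PNat.val_ofNat] at this
  exact PNat.eq (by have := i.pos; have := j.pos; omega)

theorem L1br3_single (t : ℂ) (i j : ℕ+) :
    L1br3 t (.single i 1) (.single j 1) = c13 t i j := by
  simp [L1br3, LinearMap.toSpanSingleton_apply]

noncomputable def L1br3Gen (t : ℂ) (n : ℕ+) : ℂ[X] :=
  X ^ ((n : ℕ) + 1) + if n = 2 then C t * X else 0

noncomputable def L1br3Poly (t : ℂ) : (ℕ+ →₀ ℂ) →ₗ[ℂ] ℂ[X] :=
  Finsupp.linearCombination ℂ (L1br3Gen t)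

theorem L1br3Poly_single (t : ℂ) (n : ℕ+) : L1br3Poly t (.single n 1) = L1br3Gen t n := by
  simp [L1br3Poly]

theorem coeff_L1br3Poly (t : ℂ) (x : ℕ+ →₀ ℂ) (m : ℕ+) :
    (L1br3Poly t x).coeff ((m : ℕ) + 1) = x m := by
  suffices (lcoeff ℂ ((m : ℕ) + 1)).comp (L1br3Poly t) = Finsupp.lapply m from
    LinearMap.congr_fun this x
  ext n
  have hX : (if n = 2 then C t * X else 0).coeff ((m : ℕ) + 1) = 0 := by
    split_ifs <;> simp [coeff_C, m.ne_zero]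
  simp [L1br3Poly_single, L1br3Gen, coeff_X_pow, hX, Finsupp.single_apply, eq_comm]

theorem L1br3Poly_injective (t : ℂ) : Function.Injective (L1br3Poly t) :=
  fun x y h => Finsupp.ext fun m => by rw [← coeff_L1br3Poly t x m, h, coeff_L1br3Poly]

theorem L1br3Poly_c13 (t : ℂ) (i j : ℕ+) :
    L1br3Poly t (c13 t i j) =
      L1br3Gen t i * derivative (L1br3Gen t j) - L1br3Gen t j * derivative (L1br3Gen t i) := by
  by_cases hi : i = 2 <;> by_cases hj : j = 2
  · subst hi hj
    simp [c13]
  · subst hi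
    rw [c13, if_neg (by simp [hj]), if_pos rfl]
    simp only [map_add, map_smul, L1br3Poly_single, L1br3Gen, if_neg hj,
      if_neg (PNat.add_two_ne_two j), if_pos, add_zero, PNat.add_coe, PNat.val_ofNat,
      smul_eq_C_mul, map_sub, map_natCast, map_ofNat C, map_mul, derivative_X_pow_succ,
      map_one, derivative_mul, derivative_C, derivative_X]
    ring
  · subst hj
    rw [c13, if_neg (by simp [hi]), if_neg hi, if_pos rfl]
    simp only [map_add, map_smul, map_neg, L1br3Poly_single, L1br3Gen, if_neg hi,
      if_neg (PNat.add_two_ne_two i), if_pos, add_zero, PNat.add_coe, PNat.val_ofNat,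
      smul_eq_C_mul, map_sub, map_natCast, map_ofNat C, map_mul, derivative_X_pow_succ,
      map_one, derivative_mul, derivative_C, derivative_X]
    ring
  · rw [c13, if_neg (by simp [hi]), if_neg hi, if_neg hj]
    simp only [map_smul, L1br3Poly_single, L1br3Gen, if_neg hi, if_neg hj, add_zero,
      PNat.add_coe, smul_add, smul_eq_C_mul, map_sub, map_natCast, smul_ite, smul_zero,
      derivative_X_pow_succ, map_add, map_one]
    split_ifs with h
    · obtain rfl := PNat.eq_of_add_eq_two h
      ring
    · ring

noncomputable def L1br3Rep (t : ℂ) : (ℕ+ →₀ ℂ) →ₗ[ℂ] Derivation ℂ ℂ[X] ℂ[X] :=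
  mkDerivation ℂ ∘ₗ L1br3Poly t

theorem L1br3Rep_injective (t : ℂ) : Function.Injective (L1br3Rep t) :=
  mkDerivation_injective.comp (L1br3Poly_injective t)

theorem L1br3Rep_L1br3 (t : ℂ) (x y : ℕ+ →₀ ℂ) :
    L1br3Rep t (L1br3 t x y) = ⁅L1br3Rep t x, L1br3Rep t y⁆ :=
  Finsupp.map_bracket_of_map_bracket_single _ _ (fun i j => by
    simp only [L1br3Rep, LinearMap.comp_apply, L1br3_single, L1br3Poly_c13, L1br3Poly_single,
      lie_mkDerivation]) x y

/-- for each `t ∈ ℂ` the bracket `[·,·]³_t` (modifying the `L₁` bracket only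
when one index equals `2`) is skew-symmetric and satisfies the Jacobi identity. -/
theorem stmt_13 (t : ℂ) :
    (∀ j : ℕ+, j ≠ 2 → L1br3 t (Finsupp.single 2 1) (Finsupp.single j 1) =
      (((j : ℕ) : ℂ) - 2) • Finsupp.single (j + 2) (1 : ℂ)
        + (t * ((j : ℕ) : ℂ)) • Finsupp.single j (1 : ℂ)) ∧
    (∀ i j : ℕ+, i ≠ 2 → j ≠ 2 → L1br3 t (Finsupp.single i 1) (Finsupp.single j 1) =
      (((j : ℕ) : ℂ) - ((i : ℕ) : ℂ)) • Finsupp.single (i + j) (1 : ℂ)) ∧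
    (∀ x y : ℕ+ →₀ ℂ, L1br3 t x y = -L1br3 t y x) ∧
    (∀ x y z : ℕ+ →₀ ℂ,
      L1br3 t (L1br3 t x y) z + L1br3 t (L1br3 t y z) x + L1br3 t (L1br3 t z x) y = 0) := by
  have hinj := L1br3Rep_injective t
  have hrep := L1br3Rep_L1br3 t
  refine ⟨fun j hj => ?_, fun i j hi hj => ?_,
    bracket_antisymm_of_injective_lie (L1br3 t · ·) (L1br3Rep t) hinj hrep,
    bracket_jacobi_of_injective_lie (L1br3 t · ·) (L1br3Rep t) hinj hrep⟩
  · rw [L1br3_single, c13, if_neg (by simp [hj]), if_pos rfl]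
  · rw [L1br3_single, c13, if_neg (by simp [hi]), if_neg hi, if_neg hj]
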